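/- arXiv:math/0308166 — 6 statements merged into one kernel-verified Lean document; each statement's English description precedes it below -/
import Mathlib

section
/- Let C be a max-plus convex subset of ℝmax^n that is closed in the product topology of ℝmax^n, and let y ∈ ℝmax^n with y ∉ C. Then there exist vectors w', w'' ∈ ℝmax^n and scalars d', d'' ∈ ℝmax such that max(⟨w', x⟩, d') = max(⟨w'', x⟩, d'') for every x ∈ C, while max(⟨w', y⟩, d') ≠ max(⟨w'', y⟩, d''). In other words, every point outside a closed max-plus convex subset of ℝmax^n can be separated from it by a max-plus affine hyperplane. -/
noncomputable section

/-- `ℝmax = ℝ ∪ {-∞}`, the max-plus semifield. -/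
abbrev Rmax := WithBot ℝ

/-- the order topology on `ℝmax`. -/
noncomputable instance : TopologicalSpace Rmax := Preorder.topology Rmax
instance : OrderTopology Rmax := ⟨rfl⟩

/-- the embedding of `ℝmax = ℝ ∪ {-∞}` into `ℝ̄ = [-∞,+∞]`. -/
def Rmax.toE : Rmax → EReal := WithBot.recBotCoe ⊥ (fun r : ℝ => (r : EReal))

/-- max-plus scalar product `⟨w,x⟩ = max_i (w_i + x_i)` on `ℝmax^n`. -/
def mdot {n : ℕ} (w x : Fin n → Rmax) : Rmax := Finset.univ.sup fun i => w i + x i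

/-- residuated difference: `a ⊖ b = a` if `a > b`, and `-∞` otherwise. -/
def rdiff (a b : Rmax) : Rmax := if b < a then a else ⊥

/-- max-plus convexity of a subset of `ℝmax^n`. -/
def MPConvex {n : ℕ} (C : Set (Fin n → Rmax)) : Prop :=
  ∀ x ∈ C, ∀ y ∈ C, ∀ α β : Rmax, max α β = 0 →
    (fun i => max (α + x i) (β + y i)) ∈ C

/-!
Let `D = C ∩ Iic y`. If `D` is empty, compactness of the boxes `Iic u` yields a real `u > y`
with no point of `C` below `u`, and `C` lies in the halfspace `⟨-u, x⟩ ≥ 0`, which misses `y`.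
Otherwise `D` is compact and closed under `⊔` (convexity with `α = β = 0`), so it has a
greatest element `z`, and `z i < y i` for some `i`. For `z i < κ < y i`, the points of `C`
with `x i ≥ κ` are again disjoint from `Iic y`, which gives a real `u > y` as before. Shifting
`x ∈ C` with `x i > κ` down so that its `i`-th coordinate is `κ`, and taking `⊔` with `z`,
shows `x i < ⟨κ - u, x⟩`; hence `C` lies in `x i ≤ max ⟨κ - u, x⟩ κ` while `y` does not.
A halfspace `max ⟨a, x⟩ c ≤ max ⟨b, x⟩ d` is the hyperplane
`max ⟨a ⊔ b, x⟩ (c ⊔ d) = max ⟨b, x⟩ d`.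
-/

open Set

section Compactness

variable {α : Type*} [TopologicalSpace α]

theorem IsCompact.exists_isGreatest_of_supClosed [SemilatticeSup α] [ClosedIciTopology α]
    {s : Set α} (hs : IsCompact s) (hsup : SupClosed s) (hne : s.Nonempty) :
    ∃ z, IsGreatest s z := by
  suffices (s ∩ ⋂ v : s, Ici (v : α)).Nonempty by
    obtain ⟨z, hzs, hz⟩ := this
    exact ⟨z, hzs, fun v hv => mem_iInter.1 hz ⟨v, hv⟩⟩
  rw [nonempty_iff_ne_empty]
  intro H
  have : Nonempty s := hne.to_subtype
  obtain ⟨v, hv⟩ := hs.elim_directed_family_closed (fun v : s => Ici (v : α))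
    (fun _ => isClosed_Ici) H fun v w => ⟨⟨v ⊔ w, hsup v.2 w.2⟩,
      Ici_subset_Ici.2 le_sup_left, Ici_subset_Ici.2 le_sup_right⟩
  exact (eq_empty_iff_forall_notMem.1 hv) v ⟨v.2, le_rfl⟩

theorem exists_forall_lt_disjoint_Iic {ι : Type*} [LinearOrder α] [OrderTopology α] [OrderBot α]
    [CompactIccSpace α] [DenselyOrdered α] [NoMaxOrder α] {C : Set (ι → α)} (hC : IsClosed C)
    {y : ι → α} (hy : Disjoint C (Iic y)) :
    ∃ u, (∀ i, y i < u i) ∧ Disjoint C (Iic u) := by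
  classical
  choose u₀ hu₀ using fun i => exists_gt (y i)
  have : Nonempty {u : ι → α // ∀ i, y i < u i} := ⟨⟨u₀, hu₀⟩⟩
  have hK : IsCompact (Iic u₀) := by
    rw [← Icc_bot]
    exact isCompact_Icc
  have hst : Iic u₀ ∩ ⋂ u : {u : ι → α // ∀ i, y i < u i}, C ∩ Iic u.1 = ∅ := by
    rw [eq_empty_iff_forall_notMem]
    rintro x ⟨-, hx⟩
    rw [mem_iInter] at hx
    refine hy.notMem_of_mem_left (hx ⟨u₀, hu₀⟩).1 fun i => ?_
    by_contra! hyx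
    obtain ⟨a, hya, hax⟩ := exists_between hyx
    have hua : ∀ j, y j < Function.update u₀ i a j := by
      intro j
      rcases eq_or_ne j i with rfl | hj
      · simpa using hya
      · simpa [hj] using hu₀ j
    have hxa : x i ≤ a := by simpa using (hx ⟨_, hua⟩).2 i
    exact (hxa.trans_lt hax).false
  obtain ⟨⟨u, hu⟩, hdisj⟩ :=
    hK.elim_directed_family_closed _ (fun _ => hC.inter isClosed_Iic) hst
    fun u v => ⟨⟨u.1 ⊓ v.1, fun i => lt_min (u.2 i) (v.2 i)⟩,
      inter_subset_inter_right _ (Iic_subset_Iic.2 inf_le_left),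
      inter_subset_inter_right _ (Iic_subset_Iic.2 inf_le_right)⟩
  refine ⟨u₀ ⊓ u, fun i => lt_min (hu₀ i) (hu i), ?_⟩
  rw [disjoint_iff_inter_eq_empty, ← Iic_inter_Iic, inter_left_comm, hdisj]

end Compactness

namespace Rmax

lemma coe_lt_coe_add_iff {a b : ℝ} {x : Rmax} :
    (a : Rmax) < b + x ↔ ((a - b : ℝ) : Rmax) < x := by
  induction x using WithBot.recBotCoe with
  | bot => simp
  | coe t =>
    norm_cast
    constructor <;> intro <;> linarith

lemma coe_add_lt_coe_iff {a b : ℝ} {x : Rmax} :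
    (b : Rmax) + x < a ↔ x < ((a - b : ℝ) : Rmax) := by
  induction x using WithBot.recBotCoe with
  | bot => simp
  | coe t =>
    norm_cast
    constructor <;> intro <;> linarith

end Rmax

section MaxPlus

variable {n : ℕ}

lemma le_mdot (w x : Fin n → Rmax) (i : Fin n) : w i + x i ≤ mdot w x :=
  Finset.le_sup (f := fun i => w i + x i) (Finset.mem_univ i)

lemma mdot_lt_iff {w x : Fin n → Rmax} {c : Rmax} (hc : ⊥ < c) :
    mdot w x < c ↔ ∀ i, w i + x i < c := by
  simp [mdot, Finset.sup_lt_iff hc]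

lemma mdot_sup_left (w₁ w₂ x : Fin n → Rmax) :
    mdot (w₁ ⊔ w₂) x = max (mdot w₁ x) (mdot w₂ x) := by
  simp only [mdot, Pi.sup_apply, ← Finset.sup_sup]
  congr 1
  funext i
  exact (max_add_add_right _ _ _).symm

lemma mdot_ite_eq (i : Fin n) (x : Fin n → Rmax) :
    mdot (fun l => if l = i then 0 else ⊥) x = x i := by
  refine le_antisymm (Finset.sup_le fun l _ => ?_) ?_
  · show (if l = i then (0 : Rmax) else ⊥) + x l ≤ x i
    split_ifs with h
    · simp [h]
    · simp
  · simpa using le_mdot (fun l => if l = i then (0 : Rmax) else ⊥) x i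

lemma MPConvex.supClosed {C : Set (Fin n → Rmax)} (hC : MPConvex C) : SupClosed C :=
  fun x hx y hy => by simpa [Pi.sup_def] using hC x hx y hy 0 0 (max_self 0)

lemma exists_coe_gt_forall_exists_lt {C : Set (Fin n → Rmax)} (hC : IsClosed C)
    {y : Fin n → Rmax} (hy : Disjoint C (Iic y)) :
    ∃ u : Fin n → ℝ, (∀ i, y i < u i) ∧ ∀ x ∈ C, ∃ i, (u i : Rmax) < x i := by
  obtain ⟨u, hyu, hu⟩ := exists_forall_lt_disjoint_Iic hC hy
  refine ⟨fun i => (u i).unbot (hyu i).ne_bot, by simpa using hyu, fun x hx => ?_⟩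
  have hxu : ¬ x ≤ u := hu.notMem_of_mem_left hx
  simpa [Pi.le_def] using hxu

def SeparatedByHalfspace (C : Set (Fin n → Rmax)) (y : Fin n → Rmax) : Prop :=
  ∃ (a b : Fin n → Rmax) (c d : Rmax),
    (∀ x ∈ C, max (mdot a x) c ≤ max (mdot b x) d) ∧ max (mdot b y) d < max (mdot a y) c

lemma separatedByHalfspace_of_disjoint_Iic {C : Set (Fin n → Rmax)} (hC : IsClosed C)
    {y : Fin n → Rmax} (hy : Disjoint C (Iic y)) : SeparatedByHalfspace C y := by
  obtain ⟨u, hyu, hu⟩ := exists_coe_gt_forall_exists_lt hC hy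
  set b : Fin n → Rmax := fun l => ((-u l : ℝ) : Rmax)
  have hbC : ∀ x ∈ C, 0 ≤ mdot b x := fun x hx => by
    obtain ⟨l, hl⟩ := hu x hx
    refine le_trans ?_ (le_mdot b x l)
    rw [← WithBot.coe_zero]
    exact (Rmax.coe_lt_coe_add_iff.2 (by simpa using hl)).le
  have hby : mdot b y < 0 := (mdot_lt_iff (WithBot.bot_lt_coe 0)).2 fun l =>
    Rmax.coe_add_lt_coe_iff.2 (by simpa using hyu l)
  refine ⟨b, b, 0, ⊥, fun x hx => ?_, ?_⟩
  · rw [max_bot_right]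
    exact max_le le_rfl (hbC x hx)
  · rw [max_bot_right]
    exact lt_max_of_lt_right hby

lemma exists_isGreatest_inter_Iic {C : Set (Fin n → Rmax)} (hconv : MPConvex C)
    (hC : IsClosed C) {y : Fin n → Rmax} (hy : (C ∩ Iic y).Nonempty) :
    ∃ z, IsGreatest (C ∩ Iic y) z := by
  have hK : IsCompact (C ∩ Iic y) := by
    rw [← Icc_bot]
    exact isCompact_Icc.inter_left hC
  exact hK.exists_isGreatest_of_supClosed
    (hconv.supClosed.inter fun _ hv _ hw => mem_Iic.2 (sup_le hv hw)) hy

lemma separatedByHalfspace_of_not_disjoint_Iic {C : Set (Fin n → Rmax)} (hconv : MPConvex C)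
    (hC : IsClosed C) {y : Fin n → Rmax} (hyC : y ∉ C) (hy : ¬ Disjoint C (Iic y)) :
    SeparatedByHalfspace C y := by
  obtain ⟨z, ⟨hzC, hzy⟩, hz⟩ :=
    exists_isGreatest_inter_Iic hconv hC (not_disjoint_iff_nonempty_inter.1 hy)
  obtain ⟨i, hzi⟩ : ∃ i, z i < y i := by
    by_contra! h
    exact hyC (le_antisymm hzy (Pi.le_def.2 h) ▸ hzC)
  obtain ⟨a, hza, hay⟩ := exists_between hzi
  obtain ⟨κ, rfl⟩ := WithBot.ne_bot_iff_exists.1 (ne_bot_of_gt hza)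
  have hdisj : Disjoint (C ∩ {v | (κ : Rmax) ≤ v i}) (Iic y) := by
    refine disjoint_left.2 fun v ⟨hvC, hvi⟩ hvy => ?_
    exact (hvi.trans_lt ((hz ⟨hvC, hvy⟩) i |>.trans_lt hza)).false
  obtain ⟨u, hyu, hu⟩ := exists_coe_gt_forall_exists_lt
    (hC.inter (isClosed_le continuous_const (continuous_apply i))) hdisj
  set b : Fin n → Rmax := fun l => ((κ - u l : ℝ) : Rmax)
  have hbC : ∀ x ∈ C, (κ : Rmax) < x i → x i < mdot b x := by
    intro x hx hxi
    obtain ⟨ξ, hξ⟩ := WithBot.ne_bot_iff_exists.1 (ne_bot_of_gt hxi)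
    have hκξ : κ ≤ ξ := by exact_mod_cast (hξ ▸ hxi).le
    set v : Fin n → Rmax := fun l => max (((κ - ξ : ℝ) : Rmax) + x l) (0 + z l)
    have hvC : v ∈ C := hconv x hx z hzC _ 0 (max_eq_right (by exact_mod_cast (by linarith)))
    have hvi : v i = κ := by
      simp only [v, ← hξ, zero_add, ← WithBot.coe_add, sub_add_cancel]
      exact max_eq_left hza.le
    obtain ⟨l, hl⟩ := hu v ⟨hvC, hvi.ge⟩
    have hlx : (u l : Rmax) < ((κ - ξ : ℝ) : Rmax) + x l :=
      (lt_max_iff.1 hl).resolve_right (by simpa using (hzy l).trans (hyu l).le)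
    rw [← hξ]
    refine lt_of_lt_of_le (Rmax.coe_lt_coe_add_iff.2 ?_) (le_mdot b x l)
    convert Rmax.coe_lt_coe_add_iff.1 hlx using 2
    ring
  have hby : mdot b y < κ := (mdot_lt_iff (WithBot.bot_lt_coe κ)).2 fun l =>
    Rmax.coe_add_lt_coe_iff.2 (by simpa using hyu l)
  refine ⟨fun l => if l = i then 0 else ⊥, b, ⊥, κ, fun x hx => ?_, ?_⟩
  · rw [mdot_ite_eq, max_bot_right]
    rcases le_or_gt (x i) κ with hxi | hxi
    · exact le_max_of_le_right hxi
    · exact le_max_of_le_left (hbC x hx hxi).le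
  · rw [mdot_ite_eq, max_bot_right]
    exact max_lt (hby.trans hay) hay

end MaxPlus

/-- **Separation of a point from a closed max-plus convex subset of `ℝmax^n`
by a max-plus affine hyperplane.** -/
theorem stmt0 {n : ℕ} (C : Set (Fin n → Rmax)) (hconv : MPConvex C)
    (hclosed : IsClosed C) (y : Fin n → Rmax) (hy : y ∉ C) :
    ∃ (w' w'' : Fin n → Rmax) (d' d'' : Rmax),
      (∀ x ∈ C, max (mdot w' x) d' = max (mdot w'' x) d'') ∧
      max (mdot w' y) d' ≠ max (mdot w'' y) d'' := by
  obtain ⟨a, b, c, d, hC, hyab⟩ : SeparatedByHalfspace C y := by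
    by_cases hD : Disjoint C (Iic y)
    · exact separatedByHalfspace_of_disjoint_Iic hclosed hD
    · exact separatedByHalfspace_of_not_disjoint_Iic hconv hclosed hy hD
  refine ⟨a ⊔ b, b, max c d, d, fun x hx => ?_, ?_⟩
  · rw [mdot_sup_left, max_max_max_comm]
    exact max_eq_right (hC x hx)
  · rw [mdot_sup_left, max_max_max_comm]
    exact (hyab.trans_le (le_max_left _ _)).ne'

end
end

section
/- Let ι be an index set, let C ⊆ ℝ̄^ι be a complete convex set, and let y ∈ ℝ̄^ι. Set ν_C(y) := sup over v ∈ C of min(v∖y, 0) and Q_C(y) := componentwise sup over v ∈ C of (v + min(v∖y, 0)). Then: (1) Q_C(y) belongs to Down(C), satisfies Q_C(y) ≤ y, and z ≤ Q_C(y) for every z ∈ Down(C) with z ≤ y (i.e., Q_C(y) is the greatest element of Down(C) below y); (2) if y ∈ Up(C), then Q_C(y) ∈ C, Q_C(y) is the greatest element of C below y, and ν_C(y) = 0; (3) if ν_C(y) ∈ ℝ, then the vector Q_C(y) + (−ν_C(y)) belongs to C. -/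
/-!
Everything rests on residuation: `l ≤ v∖y` iff `v + l ≤ y` componentwise. So if a generator
`x_ℓ + λ_ℓ` (with `λ_ℓ ≤ 0`) of an element of `Down(C)` lies below `y`, then
`λ_ℓ ≤ min(x_ℓ∖y, 0)`, and `Q_C(y)` dominates it; and `Q_C(y)` is itself the max-plus combination
of `C` with weights `min(v∖y, 0)`, whose supremum is `ν_C(y)`. Shifting these weights by
`-ν_C(y)` when it is finite makes them a complete convex combination, which lies in `C`; when
`y ∈ Up(C)` some weight is already `0`.
-/

noncomputable section

variable {ι : Type}

/-- the residuated quotient `a∖b = sup {λ ∈ ℝ̄ : a + λ ≤ b}` in `ℝ̄`. -/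
def eSub (a b : EReal) : EReal := sSup {l : EReal | a + l ≤ b}

/-- `v∖y = inf_i (v_i ∖ y_i)` for vectors `v, y ∈ ℝ̄^ι`. -/
def vSub (v y : ι → EReal) : EReal := ⨅ i, eSub (v i) (y i)

/-- complete (max-plus) convexity for subsets of `ℝ̄^ι`: stability under
arbitrary max-plus convex combinations. -/
def CompleteConvex (C : Set (ι → EReal)) : Prop :=
  ∀ (L : Type) (x : L → ι → EReal) (a : L → EReal),
    (∀ l, x l ∈ C) → (⨆ l, a l) = 0 → (fun i => ⨆ l, x l i + a l) ∈ C

/-- the shadow `Down(C)`: all componentwise sups of families `{x_ℓ + λ_ℓ}` with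
`x_ℓ ∈ C` and `λ_ℓ ≤ 0`. -/
def Down (C : Set (ι → EReal)) : Set (ι → EReal) :=
  {z | ∃ (L : Type) (x : L → ι → EReal) (lam : L → EReal),
    (∀ l, x l ∈ C) ∧ (∀ l, lam l ≤ 0) ∧ z = fun i => ⨆ l, x l i + lam l}

/-- the upper set `Up(C)` generated by `C`. -/
def Up (C : Set (ι → EReal)) : Set (ι → EReal) := {z | ∃ v ∈ C, v ≤ z}

theorem EReal.gc_add_eSub (a : EReal) : GaloisConnection (a + ·) (eSub a) := fun l b =>
  ⟨fun h => le_sSup h, fun h => (add_le_add le_rfl h).trans <|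
    EReal.add_le_of_forall_lt fun a' ha' l' hl' => by
      obtain ⟨m, hm, hl'm⟩ := lt_sSup_iff.mp hl'
      exact (add_le_add ha'.le hl'm.le).trans hm⟩

theorem le_vSub_iff {v y : ι → EReal} {l : EReal} : l ≤ vSub v y ↔ ∀ i, v i + l ≤ y i := by
  simp only [vSub, le_iInf_iff, ← (EReal.gc_add_eSub _).le_iff_le]

theorem EReal.gc_add_coe_sub_coe (c : ℝ) :
    GaloisConnection (· + (c : EReal)) (· - (c : EReal)) := fun _ _ =>
  (EReal.le_sub_iff_add_le (.inl (EReal.coe_ne_bot c)) (.inl (EReal.coe_ne_top c))).symm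

theorem EReal.iSup_add_coe {α : Type*} (f : α → EReal) (c : ℝ) :
    ⨆ a, (f a + c) = (⨆ a, f a) + c :=
  ((EReal.gc_add_coe_sub_coe c).l_iSup).symm

theorem subset_Down (C : Set (ι → EReal)) : C ⊆ Down C := fun z hz =>
  ⟨PUnit, fun _ => z, fun _ => 0, fun _ => hz, fun _ => le_rfl, by simp⟩

/-- `Q_C(y)` of the paper. -/
def downProj (C : Set (ι → EReal)) (y : ι → EReal) : ι → EReal :=
  fun i => ⨆ v : C, ((v : ι → EReal) i + min (vSub (v : ι → EReal) y) 0)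

/-- `ν_C(y)` of the paper. -/
def downGap (C : Set (ι → EReal)) (y : ι → EReal) : EReal :=
  ⨆ v : C, min (vSub (v : ι → EReal) y) 0

section

variable (C : Set (ι → EReal)) (y : ι → EReal)

theorem downProj_mem_Down : downProj C y ∈ Down C :=
  ⟨C, Subtype.val, fun v => min (vSub v.1 y) 0, fun v => v.2, fun _ => min_le_right _ _, rfl⟩

theorem downProj_le : downProj C y ≤ y := fun i =>
  iSup_le fun _ => le_vSub_iff.mp (min_le_left _ _) i

theorem le_downProj_of_mem_Down {z : ι → EReal} (hz : z ∈ Down C) (hzy : z ≤ y) :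
    z ≤ downProj C y := by
  obtain ⟨L, x, lam, hx, hlam, rfl⟩ := hz
  refine fun i => iSup_le fun l => ?_
  have hlam_vSub : lam l ≤ vSub (x l) y :=
    le_vSub_iff.mpr fun j => (le_iSup (fun l => x l j + lam l) l).trans (hzy j)
  exact (add_le_add le_rfl (le_min hlam_vSub (hlam l))).trans
    (le_iSup (fun v : C => v.1 i + min (vSub v.1 y) 0) ⟨x l, hx l⟩)

theorem downGap_le_zero : downGap C y ≤ 0 :=
  iSup_le fun _ => min_le_right _ _

theorem downGap_eq_zero_of_mem_Up (hy : y ∈ Up C) : downGap C y = 0 := by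
  obtain ⟨v, hv, hvy⟩ := hy
  have hv_vSub : 0 ≤ vSub v y := le_vSub_iff.mpr fun i => by simpa using hvy i
  refine (downGap_le_zero C y).antisymm ?_
  calc (0 : EReal) = min (vSub v y) 0 := (min_eq_right hv_vSub).symm
    _ ≤ downGap C y := le_iSup (fun v : C => min (vSub v.1 y) 0) ⟨v, hv⟩

variable {C}

/-- Subtracting the gap renormalises the weights `min (v∖y) 0` to a family with supremum `0`. -/
theorem CompleteConvex.downProj_add_neg_mem (hC : CompleteConvex C) {r : ℝ}
    (hr : downGap C y = r) : (fun i => downProj C y i + ((-r : ℝ) : EReal)) ∈ C := by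
  have hsup : ⨆ v : C, (min (vSub v.1 y) 0 + ((-r : ℝ) : EReal)) = 0 := by
    rw [EReal.iSup_add_coe, ← downGap, hr, ← EReal.coe_add, add_neg_cancel, EReal.coe_zero]
  convert hC C Subtype.val _ (fun v => v.2) hsup using 2 with i
  simp only [downProj, ← EReal.iSup_add_coe, add_assoc]

theorem CompleteConvex.downProj_mem_of_mem_Up (hC : CompleteConvex C) (hy : y ∈ Up C) :
    downProj C y ∈ C := by
  simpa using hC.downProj_add_neg_mem y (r := 0) (by simpa using downGap_eq_zero_of_mem_Up C y hy)

end

/-- **Geometric interpretation of `Q_C(y)` and `ν_C(y)`: `Q_C(y)` is the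
projection onto `Down(C)`, it projects `Up(C)` onto `C`, and when `ν_C(y)` is
real, `Q_C(y) + (-ν_C(y)) ∈ C`.** -/
theorem stmt3 (C : Set (ι → EReal)) (hC : CompleteConvex C) (y : ι → EReal)
    (ν : EReal) (Q : ι → EReal)
    (hν : ν = ⨆ v : C, min (vSub (v : ι → EReal) y) 0)
    (hQ : ∀ i, Q i = ⨆ v : C, ((v : ι → EReal) i + min (vSub (v : ι → EReal) y) 0)) :
    (Q ∈ Down C ∧ Q ≤ y ∧ ∀ z ∈ Down C, z ≤ y → z ≤ Q) ∧
    (y ∈ Up C → Q ∈ C ∧ Q ≤ y ∧ (∀ z ∈ C, z ≤ y → z ≤ Q) ∧ ν = 0) ∧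
    (ν ≠ ⊥ → ν ≠ ⊤ → (fun i => Q i + (-ν)) ∈ C) := by
  obtain rfl : Q = downProj C y := funext hQ
  obtain rfl : ν = downGap C y := hν
  refine ⟨⟨downProj_mem_Down C y, downProj_le C y, fun z => le_downProj_of_mem_Down C y⟩,
    fun hy => ⟨hC.downProj_mem_of_mem_Up y hy, downProj_le C y,
      fun z hz => le_downProj_of_mem_Down C y (subset_Down C hz), downGap_eq_zero_of_mem_Up C y hy⟩,
    fun hbot htop => ?_⟩
  lift downGap C y to ℝ using ⟨htop, hbot⟩ with r hr
  simpa using hC.downProj_add_neg_mem y hr.symm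

end
end

section
/- Let C ⊆ ℝmax^n be a set that is stable under binary componentwise maxima (x, y ∈ C implies max(x, y) ∈ C). Then C is closed in the product topology of ℝmax^n if and only if C is stable under directed sups and filtered infs, i.e.: (i) for every nonempty subset D ⊆ C that is directed (any two elements of D have an upper bound in D) and bounded from above, the componentwise supremum of D belongs to C; and (ii) for every nonempty subset F ⊆ C that is filtered (any two elements of F have a lower bound in F), the componentwise infimum of F belongs to C. -/
noncomputable section

/-- **A subset of `ℝmax^n` stable under binary componentwise max is closed iff
it is stable under directed sups and filtered infs.** -/
theorem stmt5 {n : ℕ} (C : Set (Fin n → Rmax))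
    (hsup : ∀ x ∈ C, ∀ y ∈ C, x ⊔ y ∈ C) :
    IsClosed C ↔
      ((∀ D ⊆ C, D.Nonempty → DirectedOn (· ≤ ·) D → BddAbove D → sSup D ∈ C) ∧
       (∀ F ⊆ C, F.Nonempty → DirectedOn (· ≥ ·) F → sInf F ∈ C)) := by
  constructor
  · intro hC
    constructor
    · intro D hDC hne hdir hbdd
      haveI := hne.to_subtype
      haveI : IsDirected D (· ≤ ·) :=
        ⟨fun a b => by
          obtain ⟨z, hz, haz, hbz⟩ := hdir a a.2 b b.2
          exact ⟨⟨z, hz⟩, haz, hbz⟩⟩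
      have hmono : Monotone (fun d : D => (d : Fin n → Rmax)) := fun _ _ h => h
      have hbdd' : BddAbove (Set.range fun d : D => (d : Fin n → Rmax)) := by
        rwa [Subtype.range_coe]
      have htend := tendsto_atTop_ciSup hmono hbdd'
      have hsup_eq : (⨆ d : D, (d : Fin n → Rmax)) = sSup D := by
        rw [iSup, Subtype.range_coe]
      rw [hsup_eq] at htend
      exact hC.mem_of_tendsto htend (Filter.Eventually.of_forall fun d => hDC d.2)
    · intro F hFC hne hdir
      haveI := hne.to_subtype
      haveI : IsDirected F (· ≥ ·) :=
        ⟨fun a b => by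
          obtain ⟨z, hz, haz, hbz⟩ := hdir a a.2 b b.2
          exact ⟨⟨z, hz⟩, haz, hbz⟩⟩
      have hmono : Monotone (fun d : F => (d : Fin n → Rmax)) := fun _ _ h => h
      have hbdd' : BddBelow (Set.range fun d : F => (d : Fin n → Rmax)) :=
        OrderBot.bddBelow _
      have htend := tendsto_atBot_ciInf hmono hbdd'
      have hinf_eq : (⨅ d : F, (d : Fin n → Rmax)) = sInf F := by
        rw [iInf, Subtype.range_coe]
      rw [hinf_eq] at htend
      exact hC.mem_of_tendsto htend (Filter.Eventually.of_forall fun d => hFC d.2)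
  · rintro ⟨h1, h2⟩
    rw [← closure_subset_iff_isClosed]
    intro x hx
    -- the set of strict upper "approximation" vectors
    set U : Set (Fin n → Rmax) := {u | ∀ i, x i < u i} with hU
    -- for each u, the truncated part of C
    have hDu_ne : ∀ u ∈ U, {y ∈ C | y ≤ u}.Nonempty := by
      intro u hu
      have hopen : IsOpen (Set.pi Set.univ fun i => Set.Iio (u i)) :=
        isOpen_set_pi Set.finite_univ fun i _ => isOpen_Iio
      have hxmem : x ∈ Set.pi Set.univ fun i => Set.Iio (u i) := fun i _ => hu i
      obtain ⟨y, hyV, hyC⟩ := (mem_closure_iff.1 hx) _ hopen hxmem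
      exact ⟨y, hyC, fun i => le_of_lt (hyV i (Set.mem_univ i))⟩
    have hDu_dir : ∀ u : Fin n → Rmax, DirectedOn (· ≤ ·) {y ∈ C | y ≤ u} := by
      rintro u y ⟨hyC, hyu⟩ z ⟨hzC, hzu⟩
      exact ⟨y ⊔ z, ⟨hsup y hyC z hzC, sup_le hyu hzu⟩, le_sup_left, le_sup_right⟩
    have hDu_bdd : ∀ u : Fin n → Rmax, BddAbove {y ∈ C | y ≤ u} :=
      fun u => ⟨u, fun y hy => hy.2⟩
    -- the sup of each truncation belongs to C
    have hsCu : ∀ u ∈ U, sSup {y ∈ C | y ≤ u} ∈ C := fun u hu =>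
      h1 _ (fun y hy => hy.1) (hDu_ne u hu) (hDu_dir u) (hDu_bdd u)
    have hsle : ∀ u : Fin n → Rmax, ∀ hu : u ∈ U, sSup {y ∈ C | y ≤ u} ≤ u := fun u hu =>
      csSup_le (hDu_ne u hu) fun y hy => hy.2
    -- x is below each truncated sup
    have hxle : ∀ u ∈ U, x ≤ sSup {y ∈ C | y ≤ u} := by
      intro u hu
      by_contra hcon
      rw [Pi.le_def, not_forall] at hcon
      obtain ⟨i, hi⟩ := hcon
      have hi' : (sSup {y ∈ C | y ≤ u}) i < x i := lt_of_not_ge hi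
      set c := (sSup {y ∈ C | y ≤ u}) i with hc
      have hopen : IsOpen ((Set.pi Set.univ fun j => Set.Iio (u j)) ∩
          ((fun y : Fin n → Rmax => y i) ⁻¹' Set.Ioi c)) :=
        (isOpen_set_pi Set.finite_univ fun j _ => isOpen_Iio).inter
          ((isOpen_Ioi).preimage (continuous_apply i))
      have hxmem : x ∈ (Set.pi Set.univ fun j => Set.Iio (u j)) ∩
          ((fun y : Fin n → Rmax => y i) ⁻¹' Set.Ioi c) :=
        ⟨fun j _ => hu j, hi'⟩
      obtain ⟨y, ⟨hyV, hyI⟩, hyC⟩ := (mem_closure_iff.1 hx) _ hopen hxmem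
      have hymem : y ∈ {y ∈ C | y ≤ u} := ⟨hyC, fun j => le_of_lt (hyV j (Set.mem_univ j))⟩
      have : y ≤ sSup {y ∈ C | y ≤ u} := le_csSup (hDu_bdd u) hymem
      exact absurd (this i) (not_le.2 hyI)
    -- the filtered family of truncated sups
    set F : Set (Fin n → Rmax) := (fun u => sSup {y ∈ C | y ≤ u}) '' U with hF
    have hFC : F ⊆ C := by rintro _ ⟨u, hu, rfl⟩; exact hsCu u hu
    have hU_ne : U.Nonempty := by
      refine ⟨fun i => (exists_gt (x i)).choose, fun i => (exists_gt (x i)).choose_spec⟩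
    have hF_ne : F.Nonempty := hU_ne.image _
    have hF_dir : DirectedOn (· ≥ ·) F := by
      rintro _ ⟨u, hu, rfl⟩ _ ⟨v, hv, rfl⟩
      have huv : u ⊓ v ∈ U := fun i => lt_inf_iff.2 ⟨hu i, hv i⟩
      refine ⟨sSup {y ∈ C | y ≤ u ⊓ v}, ⟨u ⊓ v, huv, rfl⟩, ?_, ?_⟩
      · exact csSup_le_csSup (hDu_bdd u) (hDu_ne _ huv)
          (fun y hy => ⟨hy.1, hy.2.trans inf_le_left⟩)
      · exact csSup_le_csSup (hDu_bdd v) (hDu_ne _ huv)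
          (fun y hy => ⟨hy.1, hy.2.trans inf_le_right⟩)
    have hFmem : sInf F ∈ C := h2 F hFC hF_ne hF_dir
    -- finally, x = sInf F
    have hle1 : x ≤ sInf F := le_csInf hF_ne (by rintro _ ⟨u, hu, rfl⟩; exact hxle u hu)
    have hle2 : sInf F ≤ x := by
      intro i
      by_contra hcon
      have hcon' : x i < (sInf F) i := lt_of_not_ge hcon
      obtain ⟨c, hc1, hc2⟩ := exists_between hcon'
      obtain ⟨u0, hu0⟩ := hU_ne
      have huU : Function.update u0 i c ∈ U := by
        intro j
        by_cases hji : j = i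
        · subst hji; rw [Function.update_self]; exact hc1
        · rw [Function.update_of_ne hji]; exact hu0 j
      have h3 : sInf F ≤ sSup {y ∈ C | y ≤ Function.update u0 i c} :=
        csInf_le (OrderBot.bddBelow F) ⟨Function.update u0 i c, huU, rfl⟩
      have h4 : (sInf F) i ≤ Function.update u0 i c i := (h3 i).trans (hsle _ huU i)
      rw [Function.update_self] at h4
      exact absurd h4 (not_le.2 hc2)
    have : x = sInf F := le_antisymm hle1 hle2
    rw [this]
    exact hFmem

end
end

section
/- Let ι be an index set and let C ⊆ ℝmax^ι be max-plus convex and stable under directed sups and filtered infs. Suppose v ∈ ℝmax^ι is the componentwise supremum of a family {x_ℓ + λ_ℓ}_{ℓ∈L}, where {x_ℓ}_{ℓ∈L} ⊆ C, {λ_ℓ}_{ℓ∈L} ⊆ ℝmax, and sup_ℓ λ_ℓ = 0. Then v ∈ C. (That is, the set of arbitrary max-plus convex combinations of elements of C, intersected with ℝmax^ι, equals C.) -/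
noncomputable section

/-- max-plus convexity of a subset of `ℝmax^ι`. -/
def MPConvexI {ι : Type} (C : Set (ι → Rmax)) : Prop :=
  ∀ x ∈ C, ∀ y ∈ C, ∀ α β : Rmax, max α β = 0 →
    (fun i => max (α + x i) (β + y i)) ∈ C

/-- a max-plus subsemimodule of `ℝmax^ι`: contains the bottom vector, stable
under componentwise max and under addition of scalars. -/
def MPSubmoduleI {ι : Type} (V : Set (ι → Rmax)) : Prop :=
  (fun _ => ⊥) ∈ V ∧ (∀ x ∈ V, ∀ y ∈ V, x ⊔ y ∈ V) ∧
    (∀ x ∈ V, ∀ lam : Rmax, (fun i => x i + lam) ∈ V)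

/-- stability under sups of bounded directed subsets. -/
def DirStable {ι : Type} (C : Set (ι → Rmax)) : Prop :=
  ∀ D ⊆ C, D.Nonempty → DirectedOn (· ≤ ·) D → BddAbove D → sSup D ∈ C

/-- stability under infs of filtered subsets. -/
def FiltStable {ι : Type} (C : Set (ι → Rmax)) : Prop :=
  ∀ F ⊆ C, F.Nonempty → DirectedOn (· ≥ ·) F → sInf F ∈ C

/-! Shifting every coefficient up by `ε > 0` and capping it at `0` gives coefficients whose
maximum `0` is attained. The corresponding combination `w ε` is the directed supremum of the
finite max-plus convex combinations containing a term with coefficient `0`, all of which lie in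
`C`; so `w ε ∈ C`. As `v ≤ w ε ≤ v + ε` and `w ε` decreases with `ε`, `v` is the filtered infimum
of the `w ε`, hence in `C`. -/

open Set

namespace Rmax

lemma toE_le_toE {a b : Rmax} : toE a ≤ toE b ↔ a ≤ b := by
  induction a using WithBot.recBotCoe <;> induction b using WithBot.recBotCoe <;> simp [toE]

lemma isLUB_of_toE_eq_iSup {L : Type*} {f : L → Rmax} {a : Rmax}
    (h : toE a = ⨆ l, toE (f l)) : IsLUB (range f) a := by
  refine ⟨?_, fun b hb => ?_⟩
  · rintro _ ⟨l, rfl⟩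
    exact toE_le_toE.1 (h ▸ le_iSup (fun l => toE (f l)) l)
  · exact toE_le_toE.1 (h ▸ iSup_le fun l => toE_le_toE.2 (hb ⟨l, rfl⟩))

lemma le_of_forall_pos_le_add {a b : Rmax} (h : ∀ ε : ℝ, 0 < ε → a ≤ b + ε) : a ≤ b := by
  induction b using WithBot.recBotCoe with
  | bot => simpa using h 1 one_pos
  | coe s =>
    induction a using WithBot.recBotCoe with
    | bot => exact bot_le
    | coe t =>
      exact WithBot.coe_le_coe.2
        (_root_.le_of_forall_pos_le_add fun ε hε => by exact_mod_cast h ε hε)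

lemma add_coe_nonneg {a : Rmax} {ε : ℝ} (h : ((-ε : ℝ) : Rmax) ≤ a) : 0 ≤ a + ε := by
  induction a using WithBot.recBotCoe with
  | bot => simp at h
  | coe r =>
    have : -ε ≤ r := WithBot.coe_le_coe.1 h
    exact_mod_cast (by linarith : (0 : ℝ) ≤ r + ε)

end Rmax

section

variable {ι : Type} {L : Type*} {C : Set (ι → Rmax)}

theorem MPConvexI.sup_finset_sup_mem (hconv : MPConvexI C) {x : L → ι → Rmax} (hx : ∀ l, x l ∈ C)
    {μ : L → Rmax} (hμ : ∀ l, μ l ≤ 0) {y : ι → Rmax} (hy : y ∈ C) (s : Finset L) :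
    (fun i => y i ⊔ s.sup fun l => x l i + μ l) ∈ C := by
  classical
  induction s using Finset.induction_on with
  | empty => simpa using hy
  | insert a s _ ih =>
    convert hconv _ ih (x a) (hx a) 0 (μ a) (max_eq_left (hμ a)) using 2 with i
    rw [Finset.sup_insert, zero_add, add_comm (μ a), max_assoc, max_comm (x a i + μ a)]

theorem MPConvexI.finset_sup_mem (hconv : MPConvexI C) {x : L → ι → Rmax}
    (hx : ∀ l, x l ∈ C) {μ : L → Rmax} (hμ : ∀ l, μ l ≤ 0) {s : Finset L} {a : L} (ha : a ∈ s)
    (hμa : μ a = 0) : (fun i => s.sup fun l => x l i + μ l) ∈ C := by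
  convert hconv.sup_finset_sup_mem hx hμ (hx a) s using 2 with i
  refine (sup_eq_right.2 ?_).symm
  simpa [hμa] using Finset.le_sup (f := fun l => x l i + μ l) ha

theorem MPConvexI.ciSup_mem (hconv : MPConvexI C) (hdir : DirStable C) {x : L → ι → Rmax}
    (hx : ∀ l, x l ∈ C) {μ : L → Rmax} (hμ : ∀ l, μ l ≤ 0) {a : L} (hμa : μ a = 0)
    (hbdd : ∀ i, BddAbove (range fun l => x l i + μ l)) :
    (fun i => ⨆ l, x l i + μ l) ∈ C := by
  classical
  have : Nonempty L := ⟨a⟩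
  set D := (fun s : Finset L => fun i => s.sup fun l => x l i + μ l) '' {s | a ∈ s}
  have hDC : D ⊆ C := by
    rintro _ ⟨s, hs, rfl⟩
    exact hconv.finset_sup_mem hx hμ hs hμa
  have hD : D.Nonempty := ⟨_, {a}, Finset.mem_singleton_self a, rfl⟩
  have hDdir : DirectedOn (· ≤ ·) D := by
    rintro _ ⟨s, hs, rfl⟩ _ ⟨t, -, rfl⟩
    exact ⟨_, ⟨s ∪ t, Finset.mem_union_left t hs, rfl⟩,
      fun i => Finset.sup_mono Finset.subset_union_left,
      fun i => Finset.sup_mono Finset.subset_union_right⟩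
  have hDle : ∀ f ∈ D, f ≤ fun i => ⨆ l, x l i + μ l := by
    rintro _ ⟨s, -, rfl⟩ i
    exact Finset.sup_le fun l _ => le_ciSup (hbdd i) l
  have hDbdd : BddAbove D := ⟨_, hDle⟩
  convert hdir D hDC hD hDdir hDbdd using 1
  refine le_antisymm (fun i => ciSup_le fun l => ?_) (csSup_le hD hDle)
  have hpair : (fun i => ({a, l} : Finset L).sup fun l => x l i + μ l) ≤ sSup D :=
    le_csSup hDbdd ⟨{a, l}, by simp, rfl⟩
  exact (Finset.le_sup (f := fun l => x l i + μ l) (by simp)).trans (hpair i)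

theorem FiltStable.mem_of_forall_le_le_add (hfilt : FiltStable C) {w : ℝ → ι → Rmax}
    (hwC : ∀ ε > 0, w ε ∈ C) (hmono : MonotoneOn w (Ioi 0)) {v : ι → Rmax}
    (hvw : ∀ ε > 0, v ≤ w ε) (hwv : ∀ ε > 0, ∀ i, w ε i ≤ v i + ε) : v ∈ C := by
  set W := w '' Ioi 0
  have hW : W.Nonempty := nonempty_Ioi.image w
  have hWdir : DirectedOn (· ≥ ·) W := by
    rintro _ ⟨ε, hε, rfl⟩ _ ⟨δ, hδ, rfl⟩
    have hmin : min ε δ ∈ Ioi (0 : ℝ) := mem_Ioi.2 (lt_min hε hδ)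
    exact ⟨w (min ε δ), mem_image_of_mem w hmin, hmono hmin hε (min_le_left _ _),
      hmono hmin hδ (min_le_right _ _)⟩
  convert hfilt W (image_subset_iff.2 hwC) hW hWdir
  refine le_antisymm (le_csInf hW ?_) fun i => Rmax.le_of_forall_pos_le_add fun ε hε => ?_
  · rintro _ ⟨ε, hε, rfl⟩
    exact hvw ε hε
  · exact (csInf_le (OrderBot.bddBelow W) (mem_image_of_mem w hε) i).trans (hwv ε hε i)

end

/-- **If `C ⊆ ℝmax^ι` is max-plus convex and stable under directed sups and
filtered infs, then any max-plus convex combination of elements of `C` whose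
componentwise supremum has no `+∞` coordinate belongs to `C`.** -/
theorem stmt7 {ι : Type} (C : Set (ι → Rmax)) (hconv : MPConvexI C)
    (hdir : DirStable C) (hfilt : FiltStable C)
    (L : Type) (x : L → ι → Rmax) (lam : L → Rmax)
    (hx : ∀ l, x l ∈ C) (hlam : (⨆ l, Rmax.toE (lam l)) = 0)
    (v : ι → Rmax) (hv : ∀ i, Rmax.toE (v i) = ⨆ l, Rmax.toE (x l i + lam l)) :
    v ∈ C := by
  have hlam_lub : IsLUB (range lam) 0 := Rmax.isLUB_of_toE_eq_iSup hlam.symm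
  have hv_lub i : IsLUB (range fun l => x l i + lam l) (v i) := Rmax.isLUB_of_toE_eq_iSup (hv i)
  let μ (ε : ℝ) (l : L) : Rmax := min (lam l + ε) 0
  have hμ_attained {ε : ℝ} (hε : 0 < ε) : ∃ a, μ ε a = 0 := by
    obtain ⟨_, ⟨a, rfl⟩, ha, -⟩ :=
      hlam_lub.exists_between (b := ((-ε : ℝ) : Rmax)) (by exact_mod_cast neg_lt_zero.2 hε)
    exact ⟨a, min_eq_right (Rmax.add_coe_nonneg ha.le)⟩
  have : Nonempty L := ⟨(hμ_attained one_pos).choose⟩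
  have hμ_le ε l i : x l i + μ ε l ≤ v i + ε :=
    calc x l i + μ ε l ≤ x l i + (lam l + ε) := by gcongr; exact min_le_left _ _
      _ = (x l i + lam l) + ε := (add_assoc _ _ _).symm
      _ ≤ v i + ε := by gcongr; exact (hv_lub i).1 ⟨l, rfl⟩
  have hbdd ε i : BddAbove (range fun l => x l i + μ ε l) :=
    ⟨v i + ε, forall_mem_range.2 fun l => hμ_le ε l i⟩
  refine hfilt.mem_of_forall_le_le_add (w := fun ε i => ⨆ l, x l i + μ ε l)
    (fun ε hε => ?_) (fun δ _ ε _ hδε i => ?_) (fun ε hε i => ?_) (fun ε _ i => ?_)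
  · obtain ⟨a, ha⟩ := hμ_attained hε
    exact hconv.ciSup_mem hdir hx (fun l => min_le_right _ _) ha (hbdd ε)
  · exact ciSup_mono (hbdd ε i) fun l => by dsimp only [μ]; gcongr; exact_mod_cast hδε
  · refine (hv_lub i).2 (forall_mem_range.2 fun l => le_trans ?_ (le_ciSup (hbdd ε i) l))
    gcongr
    exact le_min (le_add_of_nonneg_right (by exact_mod_cast hε.le)) (hlam_lub.1 ⟨l, rfl⟩)
  · exact ciSup_le fun l => hμ_le ε l i
end
end

section
/- Let ι be an index set, let V ⊆ ℝmax^ι be a max-plus subsemimodule that is stable under directed sups, and let y ∈ ℝmax^ι with y ∉ V. Assume the Archimedean condition: for every v ∈ V there exists a real number λ such that v + λ ≤ y componentwise. Then there exist w', w'' ∈ ℝmax^ι such that ⟨w', x⟩ = ⟨w'', x⟩ for every x ∈ V, while ⟨w', y⟩ ≠ ⟨w'', y⟩, where ⟨w, x⟩ := sup over i ∈ ι of (w_i + x_i), a supremum taken in [-∞, +∞]. (Separation of a point from the semimodule by a max-plus linear hyperplane.) -/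
noncomputable section

lemma Rmax.toE_bot : Rmax.toE ⊥ = ⊥ := rfl
lemma Rmax.toE_coe (r : ℝ) : Rmax.toE (r : Rmax) = (r : EReal) := rfl
lemma Rmax.toE_zero : Rmax.toE 0 = 0 := rfl

lemma rmax_cases (a : Rmax) : a = ⊥ ∨ ∃ r : ℝ, a = (r : Rmax) := by
  rcases eq_or_ne a ⊥ with h | h
  · exact Or.inl h
  · obtain ⟨r, hr⟩ := WithBot.ne_bot_iff_exists.mp h
    exact Or.inr ⟨r, hr.symm⟩

lemma ereal_eq_of_forall_real_le {a b : EReal} (h : ∀ c : ℝ, a ≤ c ↔ b ≤ c) : a = b := by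
  by_contra hne
  rcases lt_or_gt_of_ne hne with hlt | hlt
  · obtain ⟨c, h1, h2⟩ := EReal.exists_between_coe_real hlt
    exact absurd ((h c).mp h1.le) (not_le.mpr h2)
  · obtain ⟨c, h1, h2⟩ := EReal.exists_between_coe_real hlt
    exact absurd ((h c).mpr h1.le) (not_le.mpr h2)

/-- **Separation of a point from a max-plus subsemimodule of `ℝmax^ι` stable
under directed sups, under an Archimedean assumption, by a max-plus linear
hyperplane.** -/
theorem stmt10 {ι : Type} (V : Set (ι → Rmax)) (hmod : MPSubmoduleI V)
    (hdir : DirStable V)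
    (y : ι → Rmax) (hy : y ∉ V)
    (harch : ∀ v ∈ V, ∃ lam : ℝ, ∀ i, v i + (lam : Rmax) ≤ y i) :
    ∃ w' w'' : ι → Rmax,
      (∀ x ∈ V, (⨆ i, Rmax.toE (w' i + x i)) = ⨆ i, Rmax.toE (w'' i + x i)) ∧
      (⨆ i, Rmax.toE (w' i + y i)) ≠ ⨆ i, Rmax.toE (w'' i + y i) := by
  classical
  obtain ⟨hbot, hsup, hshift⟩ := hmod
  set D : Set (ι → Rmax) := {v | v ∈ V ∧ v ≤ y} with hD
  have hDsub : D ⊆ V := fun v hv => hv.1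
  have hDne : D.Nonempty := ⟨fun _ => ⊥, hbot, fun i => bot_le⟩
  have hDdir : DirectedOn (· ≤ ·) D := by
    intro a ha b hb
    exact ⟨a ⊔ b, ⟨hsup a ha.1 b hb.1, sup_le ha.2 hb.2⟩, le_sup_left, le_sup_right⟩
  have hDbdd : BddAbove D := ⟨y, fun v hv => hv.2⟩
  set P := sSup D with hP
  have hPV : P ∈ V := hdir D hDsub hDne hDdir hDbdd
  have hPle : P ≤ y := csSup_le hDne (fun v hv => hv.2)
  have hle_P : ∀ v ∈ D, v ≤ P := fun v hv => le_csSup hDbdd hv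
  have hPne : P ≠ y := fun h => hy (h ▸ hPV)
  obtain ⟨i0, hi0⟩ : ∃ i, P i < y i := by
    by_contra h; push_neg at h
    exact hPne (le_antisymm hPle (fun i => h i))
  refine ⟨(fun i => if P i = ⊥ then (y i).map (fun r => 1 - r) else (P i).map (fun r => -r)),
    (fun i => (y i).map (fun r => -r)), ?_, ?_⟩
  · -- equality on V
    intro x hx
    apply ereal_eq_of_forall_real_le
    intro c
    obtain ⟨lam, hlam⟩ := harch x hx
    have hxD : (fun i => x i + (lam : Rmax)) ∈ D := ⟨hshift x hx _, fun i => hlam i⟩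
    have hxP : ∀ i, x i + (lam : Rmax) ≤ P i := fun i => hle_P _ hxD i
    have hbotP : ∀ i, P i = ⊥ → x i = ⊥ := by
      intro i hPi
      by_contra hxi
      obtain ⟨t, ht⟩ := WithBot.ne_bot_iff_exists.mp hxi
      have := hxP i
      rw [hPi, ← ht] at this
      simp [← WithBot.coe_add] at this
    have hboty : ∀ i, y i = ⊥ → x i = ⊥ := by
      intro i hyi
      by_contra hxi
      obtain ⟨t, ht⟩ := WithBot.ne_bot_iff_exists.mp hxi
      have := hlam i
      rw [hyi, ← ht] at this
      simp [← WithBot.coe_add] at this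
    rw [iSup_le_iff, iSup_le_iff]
    have key : (∀ i, x i + ((-c : ℝ) : Rmax) ≤ P i) ↔ (∀ i, x i + ((-c : ℝ) : Rmax) ≤ y i) := by
      constructor
      · intro h i; exact (h i).trans (hPle i)
      · intro h
        exact fun i => hle_P _ ⟨hshift x hx _, fun j => h j⟩ i
    constructor
    · intro h i
      have h' : ∀ i, x i + ((-c : ℝ) : Rmax) ≤ P i := by
        intro i
        by_cases hPi : P i = ⊥
        · rw [hbotP i hPi]; simp
        · obtain ⟨p, hp⟩ := WithBot.ne_bot_iff_exists.mp hPi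
          rcases rmax_cases (x i) with hxi | ⟨t, hxi⟩
          · rw [hxi]; simp
          · have := h i
            simp only [if_neg hPi] at this
            rw [← hp, hxi] at this
            simp only [WithBot.map_coe, ← WithBot.coe_add, Rmax.toE_coe,
              EReal.coe_le_coe_iff] at this
            rw [← hp, hxi, ← WithBot.coe_add, WithBot.coe_le_coe]
            linarith
      have h'' := key.mp h'
      rcases rmax_cases (y i) with hyi | ⟨r, hyi⟩
      · rw [hboty i hyi]; simp [Rmax.toE]
      · rcases rmax_cases (x i) with hxi | ⟨t, hxi⟩
        · simp [hxi, Rmax.toE]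
        · have := h'' i
          rw [hyi, hxi, ← WithBot.coe_add, WithBot.coe_le_coe] at this
          simp only [hyi, hxi, WithBot.map_coe, ← WithBot.coe_add, Rmax.toE_coe,
            EReal.coe_le_coe_iff]
          linarith
    · intro h i
      have h'' : ∀ i, x i + ((-c : ℝ) : Rmax) ≤ y i := by
        intro i
        rcases rmax_cases (y i) with hyi | ⟨r, hyi⟩
        · rw [hboty i hyi]; simp
        · rcases rmax_cases (x i) with hxi | ⟨t, hxi⟩
          · rw [hxi]; simp
          · have := h i
            simp only [hyi, hxi, WithBot.map_coe, ← WithBot.coe_add, Rmax.toE_coe,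
              EReal.coe_le_coe_iff] at this
            rw [hyi, hxi, ← WithBot.coe_add, WithBot.coe_le_coe]
            linarith
      have h' := key.mpr h''
      by_cases hPi : P i = ⊥
      · rw [hbotP i hPi]; simp [Rmax.toE]
      · obtain ⟨p, hp⟩ := WithBot.ne_bot_iff_exists.mp hPi
        rcases rmax_cases (x i) with hxi | ⟨t, hxi⟩
        · simp [hxi, Rmax.toE]
        · have := h' i
          rw [← hp, hxi, ← WithBot.coe_add, WithBot.coe_le_coe] at this
          simp only [if_neg hPi]
          rw [← hp, hxi]
          simp only [WithBot.map_coe, ← WithBot.coe_add, Rmax.toE_coe,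
            EReal.coe_le_coe_iff]
          linarith
  · -- inequality at y
    have hy0 : y i0 ≠ ⊥ := fun h => by rw [h] at hi0; exact absurd hi0 (by simp)
    obtain ⟨r, hr⟩ := WithBot.ne_bot_iff_exists.mp hy0
    have hrhs : (⨆ i, Rmax.toE ((y i).map (fun r => -r) + y i)) = (0 : EReal) := by
      apply le_antisymm
      · apply iSup_le
        intro i
        rcases rmax_cases (y i) with hyi | ⟨s, hyi⟩
        · simp [hyi, Rmax.toE]
        · simp [hyi, ← WithBot.coe_add, Rmax.toE_coe, Rmax.toE_zero]
      · refine le_trans ?_ (le_iSup _ i0)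
        rw [← hr]
        simp [← WithBot.coe_add, Rmax.toE_coe, Rmax.toE_zero]
    rw [hrhs]
    intro hcon
    have hpos : (0 : EReal) < ⨆ i, Rmax.toE ((if P i = ⊥ then (y i).map (fun r => 1 - r)
        else (P i).map (fun r => -r)) + y i) := by
      refine lt_of_lt_of_le ?_ (le_iSup _ i0)
      by_cases hPi : P i0 = ⊥
      · rw [if_pos hPi, ← hr]
        simp only [WithBot.map_coe, ← WithBot.coe_add, Rmax.toE_coe]
        norm_num
      · obtain ⟨p, hp⟩ := WithBot.ne_bot_iff_exists.mp hPi
        rw [if_neg hPi, ← hp, ← hr]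
        simp only [WithBot.map_coe, ← WithBot.coe_add, Rmax.toE_coe]
        have : p < r := by
          rw [← hp, ← hr] at hi0; exact_mod_cast hi0
        exact_mod_cast by linarith
    rw [hcon] at hpos
    exact absurd hpos (lt_irrefl _)

end
end

section
/- A subset S ⊆ ℝmax^n is a lower level set of a residuated difference of max-plus affine functions — i.e., S = {x ∈ ℝmax^n : max(⟨a', x⟩, b') ⊖ max(⟨a'', x⟩, b'') ≤ t} for some a', a'' ∈ ℝmax^n, b', b'' ∈ ℝmax and t ∈ ℝ̄ — if and only if S is of the form S = {x ∈ ℝmax^n : max(⟨w', x⟩, d') ≤ max(⟨w'', x⟩, d'')} for some w', w'' ∈ ℝmax^n and d', d'' ∈ ℝmax. -/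
noncomputable section

lemma toE_le_bot {a : Rmax} : Rmax.toE a ≤ (⊥ : EReal) ↔ a = ⊥ := by
  cases a using WithBot.recBotCoe with
  | bot => simp [Rmax.toE]
  | coe r => simp [Rmax.toE]

lemma toE_le_coe {a : Rmax} {r : ℝ} : Rmax.toE a ≤ (r : EReal) ↔ a ≤ (r : Rmax) := by
  cases a using WithBot.recBotCoe with
  | bot => simp [Rmax.toE]
  | coe s => simp [Rmax.toE]

lemma rdiff_eq_bot {a b : Rmax} : rdiff a b = ⊥ ↔ a ≤ b := by
  unfold rdiff
  split
  · rename_i h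
    constructor
    · intro hb; exact absurd (hb ▸ h) (by simp)
    · intro hle; exact absurd h (not_lt.mpr hle)
  · rename_i h
    simp [not_lt.mp h]

/-- **A subset of `ℝmax^n` is a lower level set of a residuated difference of
max-plus affine functions iff it is a max-plus affine half-space
`{x : max(⟨w',x⟩,d') ≤ max(⟨w'',x⟩,d'')}`.** -/
theorem stmt18 {n : ℕ} (S : Set (Fin n → Rmax)) :
    (∃ (a' a'' : Fin n → Rmax) (b' b'' : Rmax) (t : EReal),
      S = {x | Rmax.toE (rdiff (max (mdot a' x) b') (max (mdot a'' x) b'')) ≤ t}) ↔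
    (∃ (w' w'' : Fin n → Rmax) (d' d'' : Rmax),
      S = {x | max (mdot w' x) d' ≤ max (mdot w'' x) d''}) := by
  constructor
  · rintro ⟨a', a'', b', b'', t, rfl⟩
    induction t using EReal.rec with
    | bot =>
      refine ⟨a', a'', b', b'', ?_⟩
      ext x
      simp only [Set.mem_setOf_eq, toE_le_bot, rdiff_eq_bot]
    | coe r =>
      refine ⟨a', a'', b', max b'' (r : Rmax), ?_⟩
      ext x
      simp only [Set.mem_setOf_eq]
      constructor
      · intro h
        by_cases hlt : max (mdot a'' x) b'' < max (mdot a' x) b'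
        · rw [rdiff, if_pos hlt, toE_le_coe] at h
          exact h.trans ((le_max_right _ _).trans (le_max_right _ _))
        · push_neg at hlt
          exact hlt.trans (max_le_max le_rfl (le_max_left _ _))
      · intro h
        by_cases hlt : max (mdot a'' x) b'' < max (mdot a' x) b'
        · rw [rdiff, if_pos hlt, toE_le_coe]
          have h2 : max (mdot a' x) b' ≤ max (max (mdot a'' x) b'') (r : Rmax) := by
            rw [← max_assoc] at h
            exact h
          rcases le_max_iff.mp h2 with h3 | h3
          · exact absurd hlt (not_lt.mpr h3)
          · exact h3
        · rw [rdiff, if_neg (not_lt.mpr (not_lt.mp hlt))]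
          exact bot_le
    | top =>
      refine ⟨a', a', b', b', ?_⟩
      ext x
      simp [le_top]
  · rintro ⟨w', w'', d', d'', rfl⟩
    refine ⟨w', w'', d', d'', ⊥, ?_⟩
    ext x
    simp only [Set.mem_setOf_eq, toE_le_bot, rdiff_eq_bot]


end
end
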